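/- Let d ≥ 1, M > 0, and let π^y be the Gaussian density π^y(x) = (2πM²)^{−d/2} exp(−‖x‖²/(2M²)) on ℝ^d. Then for every m ∈ ℝ^d with ‖m‖ ≤ M, π^y is an Ly(R, Q, A)-density with center m, where R² = 3M²(2d+1), Q = 2M²·(1 + (9/2)(2d+1)·exp(12d+8)), and A = (1/V_d)·(2π/(3(2d+1)))^{d/2}·exp(6d+4), V_d being the volume of the d-dimensional unit ball. -/

import Mathlib

/-! For `V x = exp (‖x‖² / (4M²))` and the Gaussian `π^y` one computes
`L V = V · (d / (2M²) - ‖x‖² / (4M⁴))`, so `L V ≤ -V / (2M²)` as soon as `‖x‖² ≥ 2M²(d+1)`,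
which holds off `B(m, R)` because `‖m‖ ≤ M`. On `B(m, R)` one has `‖x‖² ≤ 8M²(d+1)`; this bounds
`V` there (giving `h = (d+1) e^{2d+2} / (2M²)`), the oscillation of `π^y` (giving `C = e^{4d+4}`)
and the ratio `u_B / π^y`, and `Q`, `A` follow by elementary estimates. -/

open MeasureTheory RealInnerProductSpace

noncomputable section

abbrev Euc (d : ℕ) := EuclideanSpace ℝ (Fin d)

def IsDensity {d : ℕ} (ρ : Euc d → ℝ) : Prop :=
  (∀ x, 0 ≤ ρ x) ∧ ∫ x, ρ x = 1

def lap {d : ℕ} (f : Euc d → ℝ) (x : Euc d) : ℝ :=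
  ∑ i : Fin d, fderiv ℝ (fun y => fderiv ℝ f y (EuclideanSpace.single i 1)) x (EuclideanSpace.single i 1)

def LGen {d : ℕ} (ν V : Euc d → ℝ) (x : Euc d) : ℝ :=
  ⟪gradient V x, gradient (fun y => Real.log (ν y)) x⟫ + lap V x

structure IsLyapunov {d : ℕ} (ν V : Euc d → ℝ) (lam h : ℝ) (B : Set (Euc d)) (C : ℝ) : Prop where
  contDiff : ContDiff ℝ 2 V
  one_le : ∀ x, 1 ≤ V x
  lam_pos : 0 < lam
  h_pos : 0 < h
  C_pos : 0 < C
  bounded : Bornology.IsBounded B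
  drift : ∀ x, LGen ν V x ≤ -lam * V x + h * B.indicator 1 x
  ratio : ∀ x ∈ B, ∀ y ∈ B, ν x ≤ C * ν y

def uball {d : ℕ} (x₀ : Euc d) (R : ℝ) (x : Euc d) : ℝ :=
  (Metric.closedBall x₀ R).indicator (fun _ => ((volume (Metric.closedBall x₀ R)).toReal)⁻¹) x

def IsLyDensity {d : ℕ} (ν : Euc d → ℝ) (x₀ : Euc d) (R q a : ℝ) : Prop :=
  ∃ V lam h C, IsLyapunov ν V lam h (Metric.closedBall x₀ R) C ∧
    (1 + h * R ^ 2 * C ^ 2) / lam ≤ q ∧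
    ∀ x ∈ Metric.closedBall x₀ R, uball x₀ R x ≤ a * ν x

def Vball (d : ℕ) : ℝ := (volume (Metric.closedBall (0 : Euc d) 1)).toReal

def IsLogConcave {d : ℕ} (ν : Euc d → ℝ) (c L : ℝ) : Prop :=
  ContDiff ℝ 2 (fun x => -Real.log (ν x)) ∧
  (∀ x y : Euc d, c * ‖x - y‖ ^ 2 ≤
      ⟪gradient (fun z => -Real.log (ν z)) x - gradient (fun z => -Real.log (ν z)) y, x - y⟫) ∧
  (∀ x : Euc d, ‖fderiv ℝ (fun z => gradient (fun w => -Real.log (ν w)) z) x‖ ≤ L)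

def GammaR {d : ℕ} (π πy : Euc d → ℝ) (τ ρ : ℝ) (f : Euc d × Euc d → ℝ) (x y : Euc d) : ℝ :=
  ‖gradient (fun x' => f (x', y)) x‖ ^ 2 + τ * ‖gradient (fun y' => f (x, y')) y‖ ^ 2 +
    (ρ / 2) * min 1 (π y * πy x / (π x * πy y)) * (f (y, x) - f (x, y)) ^ 2

open Real Metric

section
variable {E : Type*} [NormedAddCommGroup E] [InnerProductSpace ℝ E]

lemma hasFDerivAt_mul_norm_sq (c : ℝ) (x : E) :
    HasFDerivAt (fun y : E => c * ‖y‖ ^ 2) ((2 * c) • innerSL ℝ x) x := by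
  refine (((hasFDerivAt_id x).norm_sq).const_mul c).congr_fderiv ?_
  ext y
  simp only [id, ContinuousLinearMap.comp_id, smul_apply, innerSL_apply_apply, nsmul_eq_mul,
    smul_eq_mul]
  push_cast
  ring

lemma hasFDerivAt_exp_mul_norm_sq (c : ℝ) (x : E) :
    HasFDerivAt (fun y : E => exp (c * ‖y‖ ^ 2))
      ((2 * c * exp (c * ‖x‖ ^ 2)) • innerSL ℝ x) x := by
  refine ((hasDerivAt_exp _).comp_hasFDerivAt x (hasFDerivAt_mul_norm_sq c x)).congr_fderiv ?_
  ext y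
  simp
  ring

variable [CompleteSpace E]

lemma hasGradientAt_exp_mul_norm_sq (c : ℝ) (x : E) :
    HasGradientAt (fun y : E => exp (c * ‖y‖ ^ 2))
      ((2 * c * exp (c * ‖x‖ ^ 2)) • x) x := by
  rw [hasGradientAt_iff_hasFDerivAt]
  refine (hasFDerivAt_exp_mul_norm_sq c x).congr_fderiv ?_
  ext y; simp

lemma hasGradientAt_log_mul_exp_mul_norm_sq {K : ℝ} (hK : 0 < K) (b : ℝ) (x : E) :
    HasGradientAt (fun y : E => log (K * exp (b * ‖y‖ ^ 2))) ((2 * b) • x) x := by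
  have hlog :
      (fun y : E => log (K * exp (b * ‖y‖ ^ 2))) = fun y => log K + b * ‖y‖ ^ 2 := by
    funext y; rw [log_mul hK.ne' (exp_pos _).ne', log_exp]
  rw [hlog, hasGradientAt_iff_hasFDerivAt]
  refine ((hasFDerivAt_mul_norm_sq b x).const_add (log K)).congr_fderiv ?_
  ext y; simp

end

section
variable {d : ℕ}

lemma lap_exp_mul_norm_sq (c : ℝ) (x : Euc d) :
    lap (fun y : Euc d => exp (c * ‖y‖ ^ 2)) x
      = exp (c * ‖x‖ ^ 2) * (2 * c * d + 4 * c ^ 2 * ‖x‖ ^ 2) := by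
  have hpartial (i : Fin d) :
      (fun y => fderiv ℝ (fun y : Euc d => exp (c * ‖y‖ ^ 2)) y (EuclideanSpace.single i 1))
        = fun y => 2 * c * exp (c * ‖y‖ ^ 2) * y i := by
    funext y
    simp [(hasFDerivAt_exp_mul_norm_sq c y).fderiv, EuclideanSpace.inner_single_right]
  have hsecond (i : Fin d) :
      fderiv ℝ (fun y => 2 * c * exp (c * ‖y‖ ^ 2) * y i) x (EuclideanSpace.single i 1)
        = 2 * c * exp (c * ‖x‖ ^ 2) + 4 * c ^ 2 * exp (c * ‖x‖ ^ 2) * x i ^ 2 := by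
    rw [HasFDerivAt.fderiv (f := fun y : Euc d => 2 * c * exp (c * ‖y‖ ^ 2) * y i)
      (((hasFDerivAt_exp_mul_norm_sq c x).const_mul (2 * c)).mul
        (EuclideanSpace.proj (𝕜 := ℝ) i).hasFDerivAt)]
    simp [EuclideanSpace.inner_single_right]
    ring
  simp only [lap, hpartial, hsecond, Finset.sum_add_distrib, Finset.sum_const, ← Finset.mul_sum,
    ← EuclideanSpace.real_norm_sq_eq, Finset.card_univ, Fintype.card_fin, nsmul_eq_mul]
  ring

lemma LGen_mul_exp_mul_norm_sq {K : ℝ} (hK : 0 < K) (a b : ℝ) (x : Euc d) :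
    LGen (fun y => K * exp (b * ‖y‖ ^ 2)) (fun y => exp (a * ‖y‖ ^ 2)) x
      = exp (a * ‖x‖ ^ 2) * (2 * a * d + 4 * a * (a + b) * ‖x‖ ^ 2) := by
  rw [LGen, (hasGradientAt_exp_mul_norm_sq a x).gradient,
    (hasGradientAt_log_mul_exp_mul_norm_sq hK b x).gradient, lap_exp_mul_norm_sq,
    real_inner_smul_left, real_inner_smul_right, real_inner_self_eq_norm_sq]
  ring

end

section
variable {E : Type*} [SeminormedAddCommGroup E]

lemma one_le_exp_mul_exp_neg_norm_sq_div {M s : ℝ} (hM : 0 < M) {y : E}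
    (hy : ‖y‖ ^ 2 ≤ 2 * M ^ 2 * s) : 1 ≤ exp s * exp (-‖y‖ ^ 2 / (2 * M ^ 2)) := by
  rw [← exp_add]
  refine one_le_exp ?_
  rw [neg_div, ← sub_eq_add_neg, sub_nonneg, div_le_iff₀ (by positivity)]
  linarith

lemma mul_exp_neg_norm_sq_div_le {K M s : ℝ} (hK : 0 ≤ K) (hM : 0 < M) (x : E) {y : E}
    (hy : ‖y‖ ^ 2 ≤ 2 * M ^ 2 * s) :
    K * exp (-‖x‖ ^ 2 / (2 * M ^ 2)) ≤ exp s * (K * exp (-‖y‖ ^ 2 / (2 * M ^ 2))) :=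
  calc K * exp (-‖x‖ ^ 2 / (2 * M ^ 2))
      ≤ K * (exp s * exp (-‖y‖ ^ 2 / (2 * M ^ 2))) := by
        refine mul_le_mul_of_nonneg_left ?_ hK
        refine (exp_le_one_iff.2 ?_).trans (one_le_exp_mul_exp_neg_norm_sq_div hM hy)
        exact div_nonpos_of_nonpos_of_nonneg (by nlinarith [norm_nonneg x]) (by positivity)
    _ = exp s * (K * exp (-‖y‖ ^ 2 / (2 * M ^ 2))) := by ring

variable {d : ℕ} {M R : ℝ} {m x : E}

lemma norm_sq_le_of_mem_closedBall (hM : 0 ≤ M) (hm : ‖m‖ ≤ M) (hR : 0 ≤ R)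
    (hR2 : R ^ 2 = 3 * M ^ 2 * (2 * d + 1)) (hx : x ∈ closedBall m R) :
    ‖x‖ ^ 2 ≤ 8 * M ^ 2 * (d + 1) := by
  rw [mem_closedBall, dist_eq_norm] at hx
  have hRle : R ≤ M * (d + 2) :=
    (pow_le_pow_iff_left₀ hR (by positivity) two_ne_zero).1
      (by nlinarith [sq_nonneg (M * (d - 1))])
  nlinarith [norm_sub_norm_le x m, norm_nonneg x]

lemma le_norm_sq_of_notMem_closedBall (hd : 1 ≤ d) (hM : 0 ≤ M) (hm : ‖m‖ ≤ M)
    (hR : 0 ≤ R) (hR2 : R ^ 2 = 3 * M ^ 2 * (2 * d + 1)) (hx : x ∉ closedBall m R) :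
    2 * M ^ 2 * (d + 1) ≤ ‖x‖ ^ 2 := by
  rw [mem_closedBall, dist_eq_norm, not_le] at hx
  have hd' : (1 : ℝ) ≤ d := by exact_mod_cast hd
  have hRle : R ≤ M * (2 * d + 1) :=
    (pow_le_pow_iff_left₀ hR (by positivity) two_ne_zero).1 (by nlinarith [sq_nonneg M])
  have hMle : M ≤ R := by nlinarith
  nlinarith [norm_sub_le x m]

end

section
variable {d : ℕ} {K M : ℝ}

lemma LGen_gaussian_add (hK : 0 < K) (hM : 0 < M) (x : Euc d) :
    LGen (fun y => K * exp (-‖y‖ ^ 2 / (2 * M ^ 2)))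
        (fun y => exp ((4 * M ^ 2)⁻¹ * ‖y‖ ^ 2)) x
        + (2 * M ^ 2)⁻¹ * exp ((4 * M ^ 2)⁻¹ * ‖x‖ ^ 2)
      = exp ((4 * M ^ 2)⁻¹ * ‖x‖ ^ 2)
        * ((d + 1) / (2 * M ^ 2) - ‖x‖ ^ 2 / (4 * M ^ 4)) := by
  have hν : (fun y : Euc d => K * exp (-‖y‖ ^ 2 / (2 * M ^ 2)))
      = fun y => K * exp (-(2 * M ^ 2)⁻¹ * ‖y‖ ^ 2) := by
    funext y; ring_nf
  rw [hν, LGen_mul_exp_mul_norm_sq hK]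
  field_simp
  ring

lemma LGen_gaussian_le (hK : 0 < K) (hM : 0 < M) {s : ℝ} {B : Set (Euc d)}
    (hin : ∀ x ∈ B, ‖x‖ ^ 2 ≤ 4 * M ^ 2 * s) (hout : ∀ x ∉ B, 2 * M ^ 2 * (d + 1) ≤ ‖x‖ ^ 2)
    (x : Euc d) :
    LGen (fun y => K * exp (-‖y‖ ^ 2 / (2 * M ^ 2)))
        (fun y => exp ((4 * M ^ 2)⁻¹ * ‖y‖ ^ 2)) x
      ≤ -(2 * M ^ 2)⁻¹ * exp ((4 * M ^ 2)⁻¹ * ‖x‖ ^ 2)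
        + (d + 1) / (2 * M ^ 2) * exp s * B.indicator 1 x := by
  have hadd := LGen_gaussian_add (d := d) hK hM x
  have hsq : 0 ≤ ‖x‖ ^ 2 / (4 * M ^ 4) := by positivity
  by_cases hx : x ∈ B
  · have hV : exp ((4 * M ^ 2)⁻¹ * ‖x‖ ^ 2) ≤ exp s := by
      rw [exp_le_exp, inv_mul_le_iff₀ (by positivity)]
      exact hin x hx
    have hbound :
        exp ((4 * M ^ 2)⁻¹ * ‖x‖ ^ 2) * ((d + 1) / (2 * M ^ 2) - ‖x‖ ^ 2 / (4 * M ^ 4))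
          ≤ (d + 1) / (2 * M ^ 2) * exp s := by
      have hcoef : (0 : ℝ) ≤ (d + 1) / (2 * M ^ 2) := by positivity
      nlinarith [exp_pos ((4 * M ^ 2)⁻¹ * ‖x‖ ^ 2)]
    rw [Set.indicator_of_mem hx, Pi.one_apply]
    linarith
  · have hneg : (d + 1) / (2 * M ^ 2) - ‖x‖ ^ 2 / (4 * M ^ 4) ≤ 0 := by
      rw [sub_nonpos, div_le_div_iff₀ (by positivity) (by positivity)]
      nlinarith [hout x hx, pow_pos hM 2]
    rw [Set.indicator_of_notMem hx]
    nlinarith [exp_pos ((4 * M ^ 2)⁻¹ * ‖x‖ ^ 2)]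

lemma isLyapunov_gaussian (hK : 0 < K) (hM : 0 < M) {B : Set (Euc d)}
    (hin : ∀ x ∈ B, ‖x‖ ^ 2 ≤ 8 * M ^ 2 * (d + 1))
    (hout : ∀ x ∉ B, 2 * M ^ 2 * (d + 1) ≤ ‖x‖ ^ 2) :
    IsLyapunov (fun y => K * exp (-‖y‖ ^ 2 / (2 * M ^ 2)))
      (fun y => exp ((4 * M ^ 2)⁻¹ * ‖y‖ ^ 2)) (2 * M ^ 2)⁻¹
      ((d + 1) / (2 * M ^ 2) * exp (2 * d + 2)) B (exp (4 * d + 4)) where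
  contDiff := (contDiff_exp.comp (contDiff_const.mul (contDiff_id.norm_sq ℝ))).of_le le_top
  one_le _ := one_le_exp (by positivity)
  lam_pos := by positivity
  h_pos := by positivity
  C_pos := exp_pos _
  bounded := isBounded_iff_forall_norm_le.2 ⟨_, fun x hx =>
    (le_sqrt (norm_nonneg x) (by positivity)).2 (hin x hx)⟩
  drift := LGen_gaussian_le hK hM (fun x hx => (hin x hx).trans_eq (by ring)) hout
  ratio _ _ y hy :=
    mul_exp_neg_norm_sq_div_le hK.le hM _ ((hin y hy).trans_eq (by ring))

end

lemma lyapunov_constant_le {M x : ℝ} (hM : 0 < M) (hx : 1 ≤ x) :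
    (1 + (x + 1) / (2 * M ^ 2) * exp (2 * x + 2) * (3 * M ^ 2 * (2 * x + 1))
        * exp (4 * x + 4) ^ 2) / (2 * M ^ 2)⁻¹
      ≤ 2 * M ^ 2 * (1 + 9 / 2 * (2 * x + 1) * exp (12 * x + 8)) := by
  have hexp : (x + 1) * exp (10 * x + 10) ≤ 3 * exp (12 * x + 8) := by
    have hlin : x + 1 ≤ 3 * exp (2 * x - 2) := by nlinarith [add_one_le_exp (2 * x - 2)]
    calc (x + 1) * exp (10 * x + 10) ≤ 3 * exp (2 * x - 2) * exp (10 * x + 10) := by gcongr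
      _ = 3 * exp (12 * x + 8) := by rw [mul_assoc, ← exp_add]; ring_nf
  have hsplit : (x + 1) / (2 * M ^ 2) * exp (2 * x + 2) * (3 * M ^ 2 * (2 * x + 1))
      * exp (4 * x + 4) ^ 2 = 3 / 2 * (2 * x + 1) * ((x + 1) * exp (10 * x + 10)) := by
    have : exp (10 * x + 10) = exp (2 * x + 2) * exp (4 * x + 4) ^ 2 := by
      rw [sq, ← exp_add, ← exp_add]; ring_nf
    rw [this]
    field_simp
  rw [div_inv_eq_mul, hsplit, mul_comm]
  gcongr 2 * M ^ 2 * (1 + ?_)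
  linarith [mul_le_mul_of_nonneg_left hexp (by positivity : (0 : ℝ) ≤ 3 / 2 * (2 * x + 1))]

lemma uball_of_mem {d : ℕ} {x₀ x : Euc d} {R : ℝ} (hR : 0 ≤ R) (hx : x ∈ closedBall x₀ R) :
    uball x₀ R x = (R ^ d * Vball d)⁻¹ := by
  rw [uball, Set.indicator_of_mem hx, Measure.addHaar_closedBall' volume x₀ hR,
    ENNReal.toReal_mul, ENNReal.toReal_ofReal (by positivity), Vball,
    finrank_euclideanSpace_fin]

lemma rpow_div_two_mul_rpow_neg_div_two {a b : ℝ} (ha : 0 < a) (hb : 0 < b) (n : ℕ) :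
    a ^ ((n : ℝ) / 2) * b ^ (-(n : ℝ) / 2) = (√(b / a) ^ n)⁻¹ := by
  rw [neg_div, rpow_neg hb.le, ← div_eq_mul_inv, ← inv_div, ← div_rpow hb.le ha.le,
    sqrt_eq_rpow, ← rpow_natCast, ← rpow_mul (by positivity)]
  ring_nf

lemma uball_le_mul_gaussian {d : ℕ} {M : ℝ} (hM : 0 < M) {m x : Euc d}
    (hx : x ∈ closedBall m √(3 * M ^ 2 * (2 * d + 1))) (hxM : ‖x‖ ^ 2 ≤ 8 * M ^ 2 * (d + 1)) :
    uball m √(3 * M ^ 2 * (2 * d + 1)) x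
      ≤ (Vball d)⁻¹ * (2 * π / (3 * (2 * d + 1))) ^ ((d : ℝ) / 2) * exp (6 * d + 4)
        * ((2 * π * M ^ 2) ^ (-(d : ℝ) / 2) * exp (-‖x‖ ^ 2 / (2 * M ^ 2))) := by
  have hR : 3 * M ^ 2 * (2 * d + 1) = 2 * π * M ^ 2 / (2 * π / (3 * (2 * d + 1))) := by
    field_simp
  rw [uball_of_mem (sqrt_nonneg _) hx, mul_inv, mul_comm, hR,
    ← rpow_div_two_mul_rpow_neg_div_two (by positivity) (by positivity)]
  calc _ = (Vball d)⁻¹ * (2 * π / (3 * (2 * d + 1))) ^ ((d : ℝ) / 2)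
        * (2 * π * M ^ 2) ^ (-(d : ℝ) / 2) * 1 := by ring
    _ ≤ (Vball d)⁻¹ * (2 * π / (3 * (2 * d + 1))) ^ ((d : ℝ) / 2)
        * (2 * π * M ^ 2) ^ (-(d : ℝ) / 2)
        * (exp (6 * d + 4) * exp (-‖x‖ ^ 2 / (2 * M ^ 2))) := by
      gcongr
      · exact mul_nonneg (mul_nonneg (inv_nonneg.2 ENNReal.toReal_nonneg) (by positivity))
          (by positivity)
      · exact one_le_exp_mul_exp_neg_norm_sq_div hM
          (by nlinarith [mul_nonneg (sq_nonneg M) (Nat.cast_nonneg (α := ℝ) d)])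
    _ = _ := by ring

/-- the Gaussian density `π^y(x) = (2πM²)^{−d/2} exp(−‖x‖²/(2M²))`
is an `Ly(R,Q,A)`-density with center `m` for every `‖m‖ ≤ M`, with explicit
constants `R² = 3M²(2d+1)`, `Q = 2M²(1 + (9/2)(2d+1)e^{12d+8})`,
`A = (1/V_d)(2π/(3(2d+1)))^{d/2} e^{6d+4}`. -/
theorem gaussian_is_ly_density
    (d : ℕ) (hd : 1 ≤ d) (M : ℝ) (hM : 0 < M)
    (πy : Euc d → ℝ)
    (hπy : ∀ x, πy x = (2 * Real.pi * M ^ 2) ^ (-(d : ℝ) / 2) *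
        Real.exp (-‖x‖ ^ 2 / (2 * M ^ 2)))
    (m : Euc d) (hm : ‖m‖ ≤ M) :
    IsLyDensity πy m (Real.sqrt (3 * M ^ 2 * (2 * d + 1)))
      (2 * M ^ 2 * (1 + (9 / 2) * (2 * (d : ℝ) + 1) * Real.exp (12 * d + 8)))
      ((Vball d)⁻¹ * (2 * Real.pi / (3 * (2 * (d : ℝ) + 1))) ^ ((d : ℝ) / 2) *
        Real.exp (6 * d + 4)) := by
  obtain rfl :
      πy = fun x => (2 * π * M ^ 2) ^ (-(d : ℝ) / 2) * exp (-‖x‖ ^ 2 / (2 * M ^ 2)) :=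
    funext hπy
  have hR2 : √(3 * M ^ 2 * (2 * d + 1)) ^ 2 = 3 * M ^ 2 * (2 * d + 1) := sq_sqrt (by positivity)
  have hin (x) (hx : x ∈ closedBall m √(3 * M ^ 2 * (2 * d + 1))) :=
    norm_sq_le_of_mem_closedBall hM.le hm (sqrt_nonneg _) hR2 hx
  refine ⟨_, _, _, _, isLyapunov_gaussian (by positivity) hM hin
    (fun x => le_norm_sq_of_notMem_closedBall hd hM.le hm (sqrt_nonneg _) hR2), ?_,
    fun x hx => uball_le_mul_gaussian hM hx (hin x hx)⟩
  rw [hR2]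
  exact lyapunov_constant_le hM (by exact_mod_cast hd)
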